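/- Let AF = ⟨AR, attacks⟩ be a finite argumentation framework. The formula α(AF) (over atoms d(a)) is logically equivalent in classical propositional logic to the formula obtained from β(AF) by replacing every occurrence of each atom a by ¬d(a). -/
import Mathlib


inductive PForm (α : Type) where
  | atom : α → PForm α
  | tru : PForm α
  | fls : PForm α
  | neg : PForm α → PForm α
  | conj : PForm α → PForm α → PForm α
  | disj : PForm α → PForm α → PForm α
  | impl : PForm α → PForm α → PForm α
deriving DecidableEq

def PForm.eval {α : Type} (M : Set α) : PForm α → Prop
  | .atom a => a ∈ M
  | .tru => True
  | .fls => False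
  | .neg φ => ¬ PForm.eval M φ
  | .conj φ ψ => PForm.eval M φ ∧ PForm.eval M ψ
  | .disj φ ψ => PForm.eval M φ ∨ PForm.eval M ψ
  | .impl φ ψ => PForm.eval M φ → PForm.eval M ψ

def PForm.subst {α β : Type} (σ : α → PForm β) : PForm α → PForm β
  | .atom a => σ a
  | .tru => .tru
  | .fls => .fls
  | .neg φ => .neg (PForm.subst σ φ)
  | .conj φ ψ => .conj (PForm.subst σ φ) (PForm.subst σ ψ)
  | .disj φ ψ => .disj (PForm.subst σ φ) (PForm.subst σ ψ)
  | .impl φ ψ => .impl (PForm.subst σ φ) (PForm.subst σ ψ)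

def ModelOf {α : Type} (M : Set α) (T : Set (PForm α)) : Prop := ∀ φ ∈ T, PForm.eval M φ

def MinimalModel {α : Type} (M : Set α) (T : Set (PForm α)) : Prop :=
  ModelOf M T ∧ ∀ M', ModelOf M' T → M' ⊆ M → M' = M

def MaximalModel {α : Type} (M : Set α) (T : Set (PForm α)) : Prop :=
  ModelOf M T ∧ ∀ M', ModelOf M' T → M ⊆ M' → M' = M

noncomputable def bigConj {ι α : Type} (s : Finset ι) (f : ι → PForm α) : PForm α :=
  (s.toList.map f).foldr PForm.conj PForm.tru

noncomputable def bigDisj {ι α : Type} (s : Finset ι) (f : ι → PForm α) : PForm α :=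
  (s.toList.map f).foldr PForm.disj PForm.fls

def attackers {α : Type} [DecidableEq α] (att : Finset (α × α)) (a : α) : Finset α :=
  (att.filter (fun p => p.2 = a)).image Prod.fst

def conflictFree {α : Type} (att : Finset (α × α)) (S : Set α) : Prop :=
  ∀ a ∈ S, ∀ b ∈ S, (a, b) ∉ att

def acceptable {α : Type} (att : Finset (α × α)) (S : Set α) (a : α) : Prop :=
  ∀ b, (b, a) ∈ att → ∃ c ∈ S, (c, b) ∈ att

def admissible {α : Type} (att : Finset (α × α)) (S : Set α) : Prop :=
  conflictFree att S ∧ ∀ a ∈ S, acceptable att S a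

def preferredExt {α : Type} (att : Finset (α × α)) (S : Set α) : Prop :=
  admissible att S ∧ ∀ S', admissible att S' → S ⊆ S' → S' = S

noncomputable def alphaTheory {α : Type} [DecidableEq α] (att : Finset (α × α)) : Set (PForm α) :=
  { φ | ∃ p ∈ att, φ = PForm.impl (PForm.neg (PForm.atom p.1)) (PForm.atom p.2) } ∪
  { φ | ∃ p ∈ att, φ = PForm.impl (bigConj (attackers att p.1) PForm.atom) (PForm.atom p.2) }

noncomputable def betaTheory {α : Type} [DecidableEq α] (att : Finset (α × α)) : Set (PForm α) :=
  { φ | ∃ p ∈ att, φ = PForm.impl (PForm.atom p.2) (PForm.neg (PForm.atom p.1)) } ∪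
  { φ | ∃ p ∈ att, φ = PForm.impl (PForm.atom p.2) (bigDisj (attackers att p.1) PForm.atom) }

lemma eval_foldr_disj {α : Type} (M : Set α) (l : List (PForm α)) :
    PForm.eval M (l.foldr PForm.disj PForm.fls) ↔ ∃ φ ∈ l, PForm.eval M φ := by
  induction l with
  | nil => simp [PForm.eval]
  | cons h t ih => simp [PForm.eval, ih]

lemma eval_foldr_conj {α : Type} (M : Set α) (l : List (PForm α)) :
    PForm.eval M (l.foldr PForm.conj PForm.tru) ↔ ∀ φ ∈ l, PForm.eval M φ := by
  induction l with
  | nil => simp [PForm.eval]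
  | cons h t ih => simp [PForm.eval, ih]

lemma eval_bigDisj {ι α : Type} (M : Set α) (s : Finset ι) (f : ι → PForm α) :
    PForm.eval M (bigDisj s f) ↔ ∃ i ∈ s, PForm.eval M (f i) := by
  simp [bigDisj, eval_foldr_disj]

lemma eval_bigConj {ι α : Type} (M : Set α) (s : Finset ι) (f : ι → PForm α) :
    PForm.eval M (bigConj s f) ↔ ∀ i ∈ s, PForm.eval M (f i) := by
  simp [bigConj, eval_foldr_conj]

lemma subst_foldr_disj {α β : Type} (σ : α → PForm β) (l : List (PForm α)) :
    PForm.subst σ (l.foldr PForm.disj PForm.fls)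
      = (l.map (PForm.subst σ)).foldr PForm.disj PForm.fls := by
  induction l with
  | nil => simp [PForm.subst]
  | cons h t ih => simp [PForm.subst, ih]

lemma subst_bigDisj {ι α β : Type} (σ : α → PForm β) (s : Finset ι) (f : ι → PForm α) :
    PForm.subst σ (bigDisj s f) = bigDisj s (fun i => PForm.subst σ (f i)) := by
  simp [bigDisj, subst_foldr_disj, List.map_map, Function.comp_def]

theorem stmt4 {α : Type} [DecidableEq α] [Fintype α] (att : Finset (α × α)) :
    ∀ M : Set α,
      ModelOf M ((PForm.subst (fun a => PForm.neg (PForm.atom a))) '' betaTheory att) ↔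
        ModelOf M (alphaTheory att) := by
  intro M
  constructor
  · intro h φ hφ
    rcases hφ with ⟨p, hp, rfl⟩ | ⟨p, hp, rfl⟩
    · have := h _ ⟨_, Or.inl ⟨p, hp, rfl⟩, rfl⟩
      simp only [PForm.subst, PForm.eval] at this ⊢
      tauto
    · have := h _ ⟨_, Or.inr ⟨p, hp, rfl⟩, rfl⟩
      simp only [PForm.subst, subst_bigDisj, PForm.eval, eval_bigDisj, eval_bigConj] at this ⊢
      intro hc
      by_contra h2
      rcases this h2 with ⟨c, hc1, hc2⟩
      exact hc2 (hc c hc1)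
  · intro h φ hφ
    rcases hφ with ⟨ψ, hψ, rfl⟩
    rcases hψ with ⟨p, hp, rfl⟩ | ⟨p, hp, rfl⟩
    · have := h _ (Or.inl ⟨p, hp, rfl⟩)
      simp only [PForm.subst, PForm.eval] at this ⊢
      tauto
    · have := h _ (Or.inr ⟨p, hp, rfl⟩)
      simp only [PForm.subst, subst_bigDisj, PForm.eval, eval_bigDisj, eval_bigConj] at this ⊢
      intro h2
      by_contra h3
      push_neg at h3
      exact h2 (this h3)
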